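/- arXiv:2007.10197 — 2 statements merged into one kernel-verified Lean document; each statement's English description precedes it below -/
import Mathlib

section
/- For every m ≥ 2 and all indices i_1, …, i_m ∈ {1,…,n}: if i_s = i_t for some s ≠ t, then r_{i_1 i_2 ⋯ i_m} = 0 in V^{⊗m}. -/
open scoped TensorProduct
open PiTensorProduct

namespace OrePaper

variable (k : Type*) [Field k] (V : Type*) [AddCommGroup V] [Module k V]

/-- The canonical isomorphism `V^{⊗a} ⊗ V^{⊗b} ≃ V^{⊗(a+b)}`. -/
noncomputable abbrev mulPow (a b : ℕ) :
    ((⨂[k]^a V) ⊗[k] (⨂[k]^b V)) ≃ₗ[k] ⨂[k]^(a+b) V :=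
  TensorPower.mulEquiv

variable {k V}

/-- Identification of `V` with `V^{⊗1}`. -/
noncomputable def toPow1 : V ≃ₗ[k] ⨂[k]^1 V :=
  (PiTensorProduct.subsingletonEquiv (s := fun _ => V) (0 : Fin 1)).symm

/-- `w ⊗ v ∈ V^{⊗(m+1)}` for `w ∈ V^{⊗m}`, `v ∈ V`. -/
noncomputable def append {m : ℕ} (w : ⨂[k]^m V) (v : V) : ⨂[k]^(m+1) V :=
  mulPow k V m 1 (w ⊗ₜ[k] toPow1 v)

/-- `v ⊗ w ∈ V^{⊗(m+1)}` for `v ∈ V`, `w ∈ V^{⊗m}`. -/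
noncomputable def prepend {m : ℕ} (v : V) (w : ⨂[k]^m V) : ⨂[k]^(m+1) V :=
  TensorPower.cast k V (Nat.add_comm 1 m) (mulPow k V 1 m (toPow1 v ⊗ₜ[k] w))

/-- The elements `r_{i_1 i_2 ⋯ i_m} ∈ V^{⊗m}`:
`r_{i_1 i_2} = x_{i_1} ⊗ x_{i_2} − x_{i_2} ⊗ x_{i_1}` and, recursively for `m ≥ 3`,
`r_{i_1 ⋯ i_m} = ∑_{j=1}^{m} (−1)^{m−j} r_{i_1 ⋯ î_j ⋯ i_m} ⊗ x_{i_j}`.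
(For a single index we set `r_i = x_i`, which is the convention making the left-handed
expansion hold also for `m = 2`.) -/
noncomputable def rElt {n : ℕ} (x : Fin n → V) : (m : ℕ) → (Fin m → Fin n) → ⨂[k]^m V
  | 0, _ => 0
  | 1, ι => toPow1 (x (ι 0))
  | 2, ι => append (toPow1 (x (ι 0))) (x (ι 1)) - append (toPow1 (x (ι 1))) (x (ι 0))
  | (m+3), ι => ∑ j : Fin (m+3),
      ((-1 : k)^((m+2) - (j : ℕ))) • append (rElt x (m+2) (ι ∘ j.succAbove)) (x (ι j))
/-! The elements `r` are alternating in their indices. Each summand of the recursive expansion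
deletes one index; an adjacent transposition of indices either swaps the two summands deleting
the transposed indices (whose signs differ) or acts as an adjacent transposition on the deleted
list, so induction on `m` shows that it changes the sign of `r`. As adjacent transpositions
generate the symmetric group, `r (ι ∘ σ) = sign σ • r ι`.
Antisymmetry alone does not give vanishing in characteristic `2`, so vanishing for two equal
adjacent indices is a separate induction: the two summands deleting one of them cancel, and all
other summands vanish by induction. A transposition makes any two equal indices adjacent. -/
open Equiv

lemma Fin.swap_comp_succAbove_castSucc {M : ℕ} (i : Fin (M + 1)) :
    swap i.castSucc i.succ ∘ i.castSucc.succAbove = i.succ.succAbove := by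
  ext l
  simp only [Function.comp_apply, Fin.succAbove, swap_apply_def, Fin.lt_def, Fin.ext_iff,
    Fin.val_castSucc, Fin.val_succ]
  split_ifs <;> simp_all <;> omega

lemma Fin.exists_succAbove_castSucc_succ {M : ℕ} {j : Fin (M + 2)} {i : Fin (M + 1)}
    (h₁ : j ≠ i.castSucc) (h₂ : j ≠ i.succ) :
    ∃ i' : Fin M, j.succAbove i'.castSucc = i.castSucc ∧ j.succAbove i'.succ = i.succ := by
  rw [Ne, Fin.ext_iff] at h₁ h₂
  simp only [Fin.val_castSucc, Fin.val_succ] at h₁ h₂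
  have := i.isLt
  have := j.isLt
  refine
    ⟨⟨if j < i.castSucc then i - 1 else i, by split_ifs <;> simp_all [Fin.lt_def] <;> omega⟩,
      ?_, ?_⟩ <;>
  · simp only [Fin.succAbove, Fin.lt_def, Fin.ext_iff, Fin.val_castSucc, Fin.val_succ]
    split_ifs <;> simp_all <;> omega

lemma Function.comp_swap_eq_self {α β : Type*} [DecidableEq α] {f : α → β} {a b : α}
    (h : f a = f b) : f ∘ swap a b = f := by
  ext c
  rcases eq_or_ne c a with rfl | hca
  · simp [h]
  rcases eq_or_ne c b with rfl | hcb
  · simp [h]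
  · simp [swap_apply_of_ne_of_ne hca hcb]

lemma Function.comp_swap_comp_swap {α β : Type*} [DecidableEq α] (f : α → β) (a b : α) :
    (f ∘ swap a b) ∘ swap a b = f := by
  rw [Function.comp_assoc, Function.Involutive.comp_self (swap_apply_self _ _), Function.comp_id]

lemma append_neg {m : ℕ} (w : ⨂[k]^m V) (v : V) : append (-w) v = -append w v := by
  simp [append, TensorProduct.neg_tmul]

lemma append_zero {m : ℕ} (v : V) : append (0 : ⨂[k]^m V) v = 0 := by
  simp [append]

variable {n : ℕ} (x : Fin n → V)

noncomputable def rSummand {m : ℕ} (ι : Fin (m + 2) → Fin n) (j : Fin (m + 2)) :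
    ⨂[k]^(m + 2) V :=
  ((-1 : k) ^ (m + 1 - (j : ℕ))) • append (rElt x (m + 1) (ι ∘ j.succAbove)) (x (ι j))

lemma rElt_eq_sum_rSummand {m : ℕ} (ι : Fin (m + 2) → Fin n) :
    rElt x (m + 2) ι = ∑ j, rSummand (k := k) x ι j := by
  cases m with
  | zero => simp [rSummand, rElt, Fin.sum_univ_two, sub_eq_neg_add]
  | succ m => rfl

lemma rSummand_comp_swap_castSucc {m : ℕ} (ι : Fin (m + 2) → Fin n) (i : Fin (m + 1)) :
    rSummand (k := k) x (ι ∘ swap i.castSucc i.succ) i.castSucc = -rSummand x ι i.succ := by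
  have hexp : m + 1 - (i.castSucc : ℕ) = m + 1 - (i.succ : ℕ) + 1 := by
    simp only [Fin.val_castSucc, Fin.val_succ]; omega
  simp only [rSummand, Function.comp_assoc, Fin.swap_comp_succAbove_castSucc,
    Function.comp_apply, swap_apply_left, hexp, pow_succ, mul_neg_one, neg_smul]

lemma rSummand_comp_swap_succ {m : ℕ} (ι : Fin (m + 2) → Fin n) (i : Fin (m + 1)) :
    rSummand (k := k) x (ι ∘ swap i.castSucc i.succ) i.succ = -rSummand x ι i.castSucc := by
  have h := rSummand_comp_swap_castSucc (k := k) x (ι ∘ swap i.castSucc i.succ) i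
  rw [Function.comp_swap_comp_swap] at h
  rw [h, neg_neg]

theorem rElt_comp_swap_castSucc_succ (m : ℕ) (ι : Fin (m + 1) → Fin n) (i : Fin m) :
    rElt (k := k) x (m + 1) (ι ∘ swap i.castSucc i.succ) = -rElt x (m + 1) ι := by
  induction m with
  | zero => exact i.elim0
  | succ m ih =>
    rw [rElt_eq_sum_rSummand, rElt_eq_sum_rSummand,
      ← Equiv.sum_comp (swap i.castSucc i.succ) (rSummand x ι), ← Finset.sum_neg_distrib]
    refine Finset.sum_congr rfl fun j _ => ?_
    rcases eq_or_ne j i.castSucc with rfl | h₁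
    · rw [swap_apply_left, rSummand_comp_swap_castSucc]
    rcases eq_or_ne j i.succ with rfl | h₂
    · rw [swap_apply_right, rSummand_comp_swap_succ]
    obtain ⟨i', hi'₁, hi'₂⟩ := Fin.exists_succAbove_castSucc_succ h₁ h₂
    have hcomm :
        swap i.castSucc i.succ ∘ j.succAbove = j.succAbove ∘ swap i'.castSucc i'.succ := by
      rw [← hi'₁, ← hi'₂, Fin.succAbove_right_injective.swap_comp]
    simp only [rSummand, swap_apply_of_ne_of_ne h₁ h₂, Function.comp_assoc, hcomm,
      Function.comp_apply]
    rw [← Function.comp_assoc, ih, append_neg, smul_neg]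

theorem rElt_eq_zero_of_apply_castSucc_eq_apply_succ (m : ℕ) (ι : Fin (m + 1) → Fin n)
    (i : Fin m) (he : ι i.castSucc = ι i.succ) : rElt (k := k) x (m + 1) ι = 0 := by
  induction m with
  | zero => exact i.elim0
  | succ m ih =>
    rw [rElt_eq_sum_rSummand, Fintype.sum_eq_add _ _ Fin.castSucc_lt_succ.ne]
    · have h := rSummand_comp_swap_castSucc (k := k) x ι i
      rw [Function.comp_swap_eq_self he] at h
      rw [h, neg_add_cancel]
    · rintro j ⟨h₁, h₂⟩
      obtain ⟨i', hi'₁, hi'₂⟩ := Fin.exists_succAbove_castSucc_succ h₁ h₂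
      have he' : (ι ∘ j.succAbove) i'.castSucc = (ι ∘ j.succAbove) i'.succ := by
        simp only [Function.comp_apply, hi'₁, hi'₂, he]
      rw [rSummand, ih _ i' he', append_zero, smul_zero]

theorem rElt_comp_perm (m : ℕ) (ι : Fin (m + 1) → Fin n) (σ : Perm (Fin (m + 1))) :
    rElt (k := k) x (m + 1) (ι ∘ σ) = Perm.sign σ • rElt x (m + 1) ι := by
  have hσ : σ ∈ Submonoid.closure (Set.range fun i : Fin m ↦ swap i.castSucc i.succ) := by
    rw [Perm.mclosure_swap_castSucc_succ]; trivial
  induction hσ using Submonoid.closure_induction generalizing ι with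
  | mem _ h =>
    obtain ⟨i, rfl⟩ := h
    rw [rElt_comp_swap_castSucc_succ, Perm.sign_swap Fin.castSucc_lt_succ.ne, Units.neg_smul,
      one_smul]
  | one => simp
  | mul σ τ _ _ hσ hτ =>
    rw [Perm.coe_mul, ← Function.comp_assoc, hτ, hσ, Perm.sign_mul, mul_comm, mul_smul]

theorem lemma_4_2_c_general {n : ℕ} (b : Module.Basis (Fin n) k V)
    (m : ℕ) (ι : Fin (m+2) → Fin n) (s t : Fin (m+2)) (hst : s ≠ t) (he : ι s = ι t) :
    rElt (k := k) (fun i => b i) (m+2) ι = 0 := by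
  wlog hlt : s < t generalizing s t
  · exact this t s hst.symm he.symm (hst.lt_or_gt.resolve_left hlt)
  obtain ⟨i, rfl⟩ := Fin.exists_castSucc_eq.mpr (Fin.ne_last_of_lt hlt)
  set σ := swap i.succ t
  have hadj : (ι ∘ σ) i.castSucc = (ι ∘ σ) i.succ := by
    rw [Function.comp_apply, Function.comp_apply, swap_apply_left,
      swap_apply_of_ne_of_ne Fin.castSucc_lt_succ.ne hlt.ne, he]
  have h := rElt_comp_perm (k := k) (fun i => b i) (m + 1) (ι ∘ σ) σ
  rwa [Function.comp_swap_comp_swap, rElt_eq_zero_of_apply_castSucc_eq_apply_succ _ _ _ i hadj,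
    Units.smul_def, zsmul_zero] at h

/-- **Lemma 4.2(c)**: `r_{i_1 ⋯ i_m} = 0` whenever two of the indices coincide. -/
theorem lemma_4_2_c {n : ℕ} (hn : 2 ≤ n) (b : Module.Basis (Fin n) k V)
    (m : ℕ) (ι : Fin (m+2) → Fin n) (s t : Fin (m+2)) (hst : s ≠ t) (he : ι s = ι t) :
    rElt (k := k) (fun i => b i) (m+2) ι = 0 :=
  lemma_4_2_c_general b m ι s t hst he

end OrePaper
end

section
/- Let scalars k^{(i)}_{st} ∈ k be given for 1 ≤ i, s, t ≤ n, and let δ: V → V⊗V be the linear map with δ(x_i) = ∑_{s,t=1}^{n} k^{(i)}_{st} x_s⊗x_t. For m ≥ 2 define linear maps D_{m,r}, D_{m,l}: W_m → V^{⊗(m+1)} on the basis {r_{i_1 ⋯ i_m} : i_1 < ⋯ < i_m} of W_m by D_{m,r}(r_{i_1 ⋯ i_m}) = ∑_{j=1}^{m} ∑_{s,t=1}^{n} k^{(i_j)}_{st} · r_{i_1 ⋯ i_{j−1} s i_{j+1} ⋯ i_m} ⊗ x_t and D_{m,l}(r_{i_1 ⋯ i_m}) = ∑_{j=1}^{m}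 ∑_{s,t=1}^{n} k^{(i_j)}_{st} · x_s ⊗ r_{i_1 ⋯ i_{j−1} t i_{j+1} ⋯ i_m}, and set D_{1,r} = D_{1,l} = δ. Then for every m ≥ 2, D_{m,r} + (−1)^m D_{m,l} = (id_V ⊗ D_{m−1,r}) + (−1)^m (D_{m−1,l} ⊗ id_V) as linear maps W_m → V^{⊗(m+1)}, where the right-hand side is well defined because W_m ⊆ V ⊗ W_{m−1} and W_m ⊆ W_{m−1} ⊗ V. -/
/-!
Write `r_ι = ∑_j (-1)^j x_{ι_j} ⊗ r_{ι∖j} = ∑_j (-1)^(m-1-j) r_{ι∖j} ⊗ x_{ι_j}` (indices from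
`0`, `ι∖j` the tuple with its `j`-th entry removed). The second expansion is the definition; the
first follows from it by induction, because expanding twice in either order sums over the same
ordered pairs of removed entries. Substituting the first expansion of `r_{ι[j ↦ s]}` into
`D_{m,r}` gives `id_V ⊗ D_{m-1,r}` plus the terms `(-1)^j k^{(ι_j)}_{st} x_s ⊗ r_{ι∖j} ⊗ x_t`;
substituting the second into `D_{m,l}` gives `D_{m-1,l} ⊗ id_V` plus the same terms with sign
`(-1)^(m-1-j)`. Since `(-1)^j + (-1)^m (-1)^(m-1-j) = 0`, these cancel in
`D_{m,r} + (-1)^m D_{m,l}`.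
-/

open scoped TensorProduct
open PiTensorProduct

namespace OrePaper

variable (k : Type*) [Field k] (V : Type*) [AddCommGroup V] [Module k V]

variable {k V}

/-- The value of the map `D_{m,r}` of Lemma 4.3 on the element `r_{i_1 ⋯ i_m}`:
`D_{m,r}(r_{i_1 ⋯ i_m}) = ∑_{j=1}^{m} ∑_{s,t} k^{(i_j)}_{st} r_{i_1 ⋯ i_{j−1} s i_{j+1} ⋯ i_m} ⊗ x_t`.
(For `m = 1` this is exactly `δ`, so `D_{1,r} = δ`.) -/
noncomputable def DrVal {n : ℕ} (x : Fin n → V) (K : Fin n → Fin n → Fin n → k)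
    (m : ℕ) (ι : Fin m → Fin n) : ⨂[k]^(m+1) V :=
  ∑ j : Fin m, ∑ s : Fin n, ∑ t : Fin n,
    K (ι j) s t • append (rElt x m (Function.update ι j s)) (x t)

/-- The value of the map `D_{m,l}` of Lemma 4.3 on the element `r_{i_1 ⋯ i_m}`:
`D_{m,l}(r_{i_1 ⋯ i_m}) = ∑_{j=1}^{m} ∑_{s,t} k^{(i_j)}_{st} x_s ⊗ r_{i_1 ⋯ i_{j−1} t i_{j+1} ⋯ i_m}`.
(For `m = 1` this is exactly `δ`, so `D_{1,l} = δ`.) -/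
noncomputable def DlVal {n : ℕ} (x : Fin n → V) (K : Fin n → Fin n → Fin n → k)
    (m : ℕ) (ι : Fin m → Fin n) : ⨂[k]^(m+1) V :=
  ∑ j : Fin m, ∑ s : Fin n, ∑ t : Fin n,
    K (ι j) s t • prepend (x s) (rElt x m (Function.update ι j t))

lemma toPow1_eq_tprod (v : V) : (toPow1 v : ⨂[k]^1 V) = PiTensorProduct.tprod k fun _ => v := by
  rw [toPow1, LinearEquiv.symm_apply_eq, subsingletonEquiv_apply_tprod]

lemma append_tprod {m : ℕ} (f : Fin m → V) (v : V) :
    append (PiTensorProduct.tprod k f) v = PiTensorProduct.tprod k (Fin.snoc f v) := by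
  have h := TensorPower.tprod_mul_tprod k f fun _ : Fin 1 => v
  rw [TensorPower.gMul_def] at h
  rw [append, toPow1_eq_tprod, h, Fin.append_right_eq_snoc]

lemma prepend_tprod {m : ℕ} (v : V) (f : Fin m → V) :
    prepend v (PiTensorProduct.tprod k f) = PiTensorProduct.tprod k (Fin.cons v f) := by
  have h := TensorPower.tprod_mul_tprod k (fun _ : Fin 1 => v) f
  rw [TensorPower.gMul_def] at h
  rw [prepend, toPow1_eq_tprod, h, TensorPower.cast_tprod, Fin.append_left_eq_cons]
  rfl

variable (k) in
noncomputable def appendₗ (m : ℕ) (v : V) : (⨂[k]^m V) →ₗ[k] ⨂[k]^(m+1) V :=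
  (mulPow k V m 1).toLinearMap ∘ₗ (TensorProduct.mk k _ _).flip (toPow1 v)

variable (k) in
noncomputable def prependₗ (m : ℕ) (v : V) : (⨂[k]^m V) →ₗ[k] ⨂[k]^(m+1) V :=
  (TensorPower.cast k V (Nat.add_comm 1 m)).toLinearMap ∘ₗ
    (mulPow k V 1 m).toLinearMap ∘ₗ TensorProduct.mk k _ _ (toPow1 v)

lemma append_eq_appendₗ {m : ℕ} (w : ⨂[k]^m V) (v : V) : append w v = appendₗ k m v w := rfl

lemma prepend_eq_prependₗ {m : ℕ} (v : V) (w : ⨂[k]^m V) : prepend v w = prependₗ k m v w := rfl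

lemma append_add {m : ℕ} (w₁ w₂ : ⨂[k]^m V) (v : V) :
    append (w₁ + w₂) v = append w₁ v + append w₂ v :=
  map_add (appendₗ k m v) w₁ w₂

lemma prepend_add {m : ℕ} (v : V) (w₁ w₂ : ⨂[k]^m V) :
    prepend v (w₁ + w₂) = prepend v w₁ + prepend v w₂ :=
  map_add (prependₗ k m v) w₁ w₂

lemma append_smul {m : ℕ} (c : k) (w : ⨂[k]^m V) (v : V) :
    append (c • w) v = c • append w v :=
  map_smul (appendₗ k m v) c w

lemma prepend_smul {m : ℕ} (c : k) (v : V) (w : ⨂[k]^m V) :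
    prepend v (c • w) = c • prepend v w :=
  map_smul (prependₗ k m v) c w

lemma append_sum {ι : Type*} (s : Finset ι) {m : ℕ} (w : ι → ⨂[k]^m V) (v : V) :
    append (∑ i ∈ s, w i) v = ∑ i ∈ s, append (w i) v :=
  map_sum (appendₗ k m v) w s

lemma prepend_sum {ι : Type*} (s : Finset ι) {m : ℕ} (v : V) (w : ι → ⨂[k]^m V) :
    prepend v (∑ i ∈ s, w i) = ∑ i ∈ s, prepend v (w i) :=
  map_sum (prependₗ k m v) w s

lemma prepend_append {m : ℕ} (v u : V) (w : ⨂[k]^m V) :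
    prepend v (append w u) = append (prepend v w) u := by
  have h : prependₗ k (m+1) v ∘ₗ appendₗ k m u = appendₗ k (m+1) u ∘ₗ prependₗ k m v := by
    ext f
    simp only [LinearMap.compMultilinearMap_apply, LinearMap.comp_apply, ← append_eq_appendₗ,
      ← prepend_eq_prependₗ, append_tprod, prepend_tprod, Fin.cons_snoc_eq_snoc_cons]
  exact LinearMap.congr_fun h w

lemma prepend_toPow1 (v u : V) : prepend v (toPow1 u : ⨂[k]^1 V) = append (toPow1 v) u := by
  rw [toPow1_eq_tprod, toPow1_eq_tprod, prepend_tprod, append_tprod]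
  congr 1
  ext i
  fin_cases i <;> rfl

-- Removing entry `i` and then entry `j` of what is left removes the same two entries as removing
-- entry `i.succAbove j` first and then entry `j.predAbove i`.
lemma succAbove_predAbove_involutive (N : ℕ) :
    Function.Involutive fun z : Fin (N+2) × Fin (N+1) => (z.1.succAbove z.2, z.2.predAbove z.1) :=
  fun z => Prod.ext (Fin.succAbove_succAbove_predAbove z.1 z.2)
    (Fin.predAbove_predAbove_succAbove z.1 z.2)

lemma sum_sum_succAbove_predAbove {M : Type*} [AddCommMonoid M] {N : ℕ}
    (f : Fin (N+2) → Fin (N+1) → M) :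
    ∑ i : Fin (N+2), ∑ j : Fin (N+1), f (i.succAbove j) (j.predAbove i) = ∑ i, ∑ j, f i j := by
  simp only [← Fintype.sum_prod_type']
  exact Equiv.sum_comp (succAbove_predAbove_involutive N).toPerm
    fun z : Fin (N+2) × Fin (N+1) => f z.1 z.2

lemma neg_one_pow_succAbove_add {R : Type*} [Monoid R] [HasDistribNeg R] {N : ℕ}
    (i : Fin (N+2)) (j : Fin (N+1)) :
    (-1 : R) ^ ((i.succAbove j : ℕ) + (N - (j.predAbove i : ℕ))) =
      (-1) ^ ((N + 1 - i) + j : ℕ) := by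
  congr 1
  simp only [Fin.succAbove, Fin.predAbove, Fin.lt_def, Fin.val_castSucc, apply_dite Fin.val,
    Fin.val_pred, Fin.coe_castPred, dite_eq_ite, apply_ite Fin.val, Fin.val_succ]
  split_ifs <;> omega

lemma succAbove_comp_succAbove_predAbove {N : ℕ} (i : Fin (N+2)) (j : Fin (N+1)) :
    (i.succAbove j).succAbove ∘ (j.predAbove i).succAbove = i.succAbove ∘ j.succAbove :=
  funext (Fin.succAbove_succAbove_succAbove_predAbove i j)

lemma update_comp_succAbove_succAbove {α : Type*} {N : ℕ} (ι : Fin (N+2) → α) (j : Fin (N+2))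
    (c : Fin (N+1)) (a : α) :
    Function.update ι j a ∘ (j.succAbove c).succAbove =
      Function.update (ι ∘ (j.succAbove c).succAbove) (c.predAbove j) a := by
  have h := Function.update_comp_eq_of_injective ι
    (Fin.succAbove_right_injective (p := j.succAbove c)) (c.predAbove j) a
  rwa [Fin.succAbove_succAbove_predAbove] at h

section rElt

variable {n : ℕ} (x : Fin n → V)

lemma rElt_add_two (m : ℕ) (ι : Fin (m+2) → Fin n) :
    rElt (k := k) x (m+2) ι = ∑ j : Fin (m+2), (-1 : k) ^ (m + 1 - j : ℕ) •
      append (rElt x (m+1) (ι ∘ j.succAbove)) (x (ι j)) := by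
  cases m with
  | zero => simp [rElt, Fin.sum_univ_two, sub_eq_neg_add]
  | succ m => rfl

lemma rElt_add_two_eq_sum_prepend (m : ℕ) (ι : Fin (m+2) → Fin n) :
    rElt (k := k) x (m+2) ι = ∑ j : Fin (m+2), (-1 : k) ^ (j : ℕ) •
      prepend (x (ι j)) (rElt x (m+1) (ι ∘ j.succAbove)) := by
  induction m with
  | zero => simp [rElt, Fin.sum_univ_two, prepend_toPow1, sub_eq_add_neg]
  | succ m ih =>
    let F : Fin (m+3) → Fin (m+2) → ⨂[k]^(m+3) V := fun i j =>
      (-1 : k) ^ ((i : ℕ) + (m + 1 - j)) •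
        prepend (x (ι i))
          (append (rElt x (m+1) (ι ∘ i.succAbove ∘ j.succAbove)) (x (ι (i.succAbove j))))
    calc rElt (k := k) x (m+3) ι
        = ∑ i : Fin (m+3), ∑ j : Fin (m+2), F (i.succAbove j) (j.predAbove i) := by
          rw [rElt_add_two]
          refine Finset.sum_congr rfl fun i _ => ?_
          rw [ih, append_sum, Finset.smul_sum]
          refine Finset.sum_congr rfl fun j _ => ?_
          simp only [F, append_smul, smul_smul, ← pow_add, neg_one_pow_succAbove_add,
            Fin.succAbove_succAbove_predAbove, succAbove_comp_succAbove_predAbove, prepend_append,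
            Function.comp_apply]
          rfl
      _ = ∑ i : Fin (m+3), ∑ j : Fin (m+2), F i j := sum_sum_succAbove_predAbove F
      _ = _ := by
          refine Finset.sum_congr rfl fun i _ => ?_
          rw [rElt_add_two, prepend_sum, Finset.smul_sum]
          refine Finset.sum_congr rfl fun j _ => ?_
          rw [prepend_smul, smul_smul, ← pow_add]
          rfl

end rElt

section D

variable {n : ℕ} (x : Fin n → V) (K : Fin n → Fin n → Fin n → k)

lemma rElt_update_eq_prepend (m : ℕ) (ι : Fin (m+2) → Fin n) (j : Fin (m+2)) (s : Fin n) :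
    rElt (k := k) x (m+2) (Function.update ι j s) =
      (-1 : k) ^ (j : ℕ) • prepend (x s) (rElt x (m+1) (ι ∘ j.succAbove)) +
      ∑ c : Fin (m+1), (-1 : k) ^ (j.succAbove c : ℕ) • prepend (x (ι (j.succAbove c)))
        (rElt x (m+1) (Function.update (ι ∘ (j.succAbove c).succAbove) (c.predAbove j) s)) := by
  rw [rElt_add_two_eq_sum_prepend, Fin.sum_univ_succAbove _ j, Function.update_self,
    Function.update_comp_eq_of_forall_ne _ _ (Fin.succAbove_ne j)]
  simp only [Function.update_of_ne (Fin.succAbove_ne j _), update_comp_succAbove_succAbove]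

lemma rElt_update_eq_append (m : ℕ) (ι : Fin (m+2) → Fin n) (j : Fin (m+2)) (t : Fin n) :
    rElt (k := k) x (m+2) (Function.update ι j t) =
      (-1 : k) ^ (m + 1 - j : ℕ) • append (rElt x (m+1) (ι ∘ j.succAbove)) (x t) +
      ∑ c : Fin (m+1), (-1 : k) ^ (m + 1 - j.succAbove c : ℕ) •
        append (rElt x (m+1) (Function.update (ι ∘ (j.succAbove c).succAbove) (c.predAbove j) t))
          (x (ι (j.succAbove c))) := by
  rw [rElt_add_two, Fin.sum_univ_succAbove _ j, Function.update_self,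
    Function.update_comp_eq_of_forall_ne _ _ (Fin.succAbove_ne j)]
  simp only [Function.update_of_ne (Fin.succAbove_ne j _), update_comp_succAbove_succAbove]

lemma DrVal_add_two (m : ℕ) (ι : Fin (m+2) → Fin n) :
    DrVal x K (m+2) ι =
      ∑ j : Fin (m+2), (-1 : k) ^ (j : ℕ) • ∑ s, ∑ t,
        K (ι j) s t • prepend (x s) (append (rElt x (m+1) (ι ∘ j.succAbove)) (x t)) +
      ∑ j : Fin (m+2), (-1 : k) ^ (j : ℕ) •
        prepend (x (ι j)) (DrVal x K (m+1) (ι ∘ j.succAbove)) := by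
  let F : Fin (m+2) → Fin (m+1) → ⨂[k]^(m+3) V := fun a c =>
    (-1 : k) ^ (a : ℕ) • prepend (x (ι a)) (∑ s, ∑ t, K ((ι ∘ a.succAbove) c) s t •
      append (rElt x (m+1) (Function.update (ι ∘ a.succAbove) c s)) (x t))
  calc DrVal x K (m+2) ι
      = ∑ j : Fin (m+2), (-1 : k) ^ (j : ℕ) • ∑ s, ∑ t,
          K (ι j) s t • prepend (x s) (append (rElt x (m+1) (ι ∘ j.succAbove)) (x t)) +
        ∑ j : Fin (m+2), ∑ c : Fin (m+1), F (j.succAbove c) (c.predAbove j) := by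
        rw [← Finset.sum_add_distrib]
        refine Finset.sum_congr rfl fun j _ => ?_
        simp only [F, rElt_update_eq_prepend, append_add, append_sum, append_smul, smul_add,
          Finset.sum_add_distrib, Finset.smul_sum, prepend_sum, prepend_smul, smul_smul,
          prepend_append, Function.comp_apply, Fin.succAbove_succAbove_predAbove]
        simp only [mul_comm]
        exact congrArg (_ + ·) ((Finset.sum_congr rfl fun _ _ => Finset.sum_comm).trans
          Finset.sum_comm)
    _ = _ := by
        rw [sum_sum_succAbove_predAbove F]
        simp only [F, ← Finset.smul_sum, ← prepend_sum]
        rfl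

lemma DlVal_add_two (m : ℕ) (ι : Fin (m+2) → Fin n) :
    DlVal x K (m+2) ι =
      ∑ j : Fin (m+2), (-1 : k) ^ (m + 1 - j : ℕ) • ∑ s, ∑ t,
        K (ι j) s t • prepend (x s) (append (rElt x (m+1) (ι ∘ j.succAbove)) (x t)) +
      ∑ j : Fin (m+2), (-1 : k) ^ (m + 1 - j : ℕ) •
        append (DlVal x K (m+1) (ι ∘ j.succAbove)) (x (ι j)) := by
  let F : Fin (m+2) → Fin (m+1) → ⨂[k]^(m+3) V := fun a c =>
    (-1 : k) ^ (m + 1 - a : ℕ) • append (∑ s, ∑ t, K ((ι ∘ a.succAbove) c) s t •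
      prepend (x s) (rElt x (m+1) (Function.update (ι ∘ a.succAbove) c t))) (x (ι a))
  calc DlVal x K (m+2) ι
      = ∑ j : Fin (m+2), (-1 : k) ^ (m + 1 - j : ℕ) • ∑ s, ∑ t,
          K (ι j) s t • prepend (x s) (append (rElt x (m+1) (ι ∘ j.succAbove)) (x t)) +
        ∑ j : Fin (m+2), ∑ c : Fin (m+1), F (j.succAbove c) (c.predAbove j) := by
        rw [← Finset.sum_add_distrib]
        refine Finset.sum_congr rfl fun j _ => ?_
        simp only [F, rElt_update_eq_append, prepend_add, append_sum, append_smul, smul_add,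
          Finset.sum_add_distrib, Finset.smul_sum, prepend_sum, prepend_smul, smul_smul,
          prepend_append, Function.comp_apply, Fin.succAbove_succAbove_predAbove]
        simp only [mul_comm]
        exact congrArg (_ + ·) ((Finset.sum_congr rfl fun _ _ => Finset.sum_comm).trans
          Finset.sum_comm)
    _ = _ := by
        rw [sum_sum_succAbove_predAbove F]
        simp only [F, ← Finset.smul_sum, ← append_sum]
        rfl

end D

lemma neg_one_pow_add_two_mul_neg_one_pow_sub {R : Type*} [Monoid R] [HasDistribNeg R]
    (m j : ℕ) (hj : j ≤ m + 1) :
    (-1 : R) ^ (m + 2) * (-1) ^ (m + 1 - j) = -(-1) ^ j := by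
  rw [← pow_add, show m + 2 + (m + 1 - j) = j + 1 + 2 * (m + 1 - j) by omega, pow_add, pow_mul,
    neg_one_sq, one_pow, mul_one, pow_succ, mul_neg_one]

theorem lemma_4_3_pair_general {n : ℕ} (b : Module.Basis (Fin n) k V)
    (K : Fin n → Fin n → Fin n → k)
    (m : ℕ) (ι : Fin (m+2) → Fin n) :
    DrVal (fun i => b i) K (m+2) ι + ((-1 : k)^(m+2)) • DlVal (fun i => b i) K (m+2) ι
      = (∑ j : Fin (m+2), ((-1 : k)^((j : ℕ))) •
            (prepend (b (ι j)) (DrVal (fun i => b i) K (m+1) (ι ∘ j.succAbove))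
              : ⨂[k]^(m+3) V))
        + ((-1 : k)^(m+2)) •
            ∑ j : Fin (m+2), ((-1 : k)^((m+1) - (j : ℕ))) •
              (append (DlVal (fun i => b i) K (m+1) (ι ∘ j.succAbove)) (b (ι j))
                : ⨂[k]^(m+3) V) := by
  have hsign (j : Fin (m+2)) : (-1 : k) ^ (m + 2) * (-1) ^ (m + 1 - j : ℕ) = -(-1) ^ (j : ℕ) :=
    neg_one_pow_add_two_mul_neg_one_pow_sub m j (by omega)
  rw [DrVal_add_two, DlVal_add_two, smul_add, add_add_add_comm]
  refine (congrArg (· + _) ?_).trans (zero_add _)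
  rw [Finset.smul_sum, ← Finset.sum_add_distrib]
  refine Finset.sum_eq_zero fun j _ => ?_
  rw [smul_smul, hsign j, neg_smul, add_neg_cancel]

/-- The maps `D_{m,r}, D_{m,l}` of Lemma 4.3 form a sequence pair (with `σ = id`):
`D_{m,r} + (−1)^m D_{m,l} = (id_V ⊗ D_{m−1,r}) + (−1)^m (D_{m−1,l} ⊗ id_V)` as linear maps
`W_m → V^{⊗(m+1)}` for every `m ≥ 2`.  Evaluated on the basis element `r_{i_1 ⋯ i_m}`
(with `i_1 < ⋯ < i_m`), the right-hand side is computed via the expansions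
`r_{i_1⋯i_m} = ∑_j (−1)^{j+1} x_{i_j} ⊗ r_{…î_j…} = ∑_j (−1)^{m−j} r_{…î_j…} ⊗ x_{i_j}`. -/
theorem lemma_4_3_pair {n : ℕ} (hn : 2 ≤ n) (b : Module.Basis (Fin n) k V)
    (K : Fin n → Fin n → Fin n → k)
    (m : ℕ) (ι : Fin (m+2) → Fin n) (hι : StrictMono ι) :
    DrVal (fun i => b i) K (m+2) ι + ((-1 : k)^(m+2)) • DlVal (fun i => b i) K (m+2) ι
      = (∑ j : Fin (m+2), ((-1 : k)^((j : ℕ))) •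
            (prepend (b (ι j)) (DrVal (fun i => b i) K (m+1) (ι ∘ j.succAbove))
              : ⨂[k]^(m+3) V))
        + ((-1 : k)^(m+2)) •
            ∑ j : Fin (m+2), ((-1 : k)^((m+1) - (j : ℕ))) •
              (append (DlVal (fun i => b i) K (m+1) (ι ∘ j.succAbove)) (b (ι j))
                : ⨂[k]^(m+3) V) :=
  lemma_4_3_pair_general b K m ι

end OrePaper
end
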